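/- arXiv:1311.1363 — 3 statements merged into one kernel-verified Lean document; each statement's English description precedes it below -/
import Mathlib

section
/- Let n be a positive integer, x : Fin n → ℤ with x l ≠ 0 for all l, and y ∈ ℤ. The map sending an antipodal vector a : Fin n → ℤ (with a l ∈ {-1,1} for all l) to the binary vector b defined by b l = (sign(x l) * a l + 1)/2 is a bijection between the set of antipodal vectors a satisfying y = ∑ l, a l * x l and the set of binary vectors b : Fin n → ℤ (with b l ∈ {0,1}) satisfying (y + ∑ l, |x l|)/2 = ∑ l, b l * |x l| (where the latter equation is interpreted as y + ∑ l, |x l| = 2 * ∑ l, b l * |x l|). -/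
/-! Since `x l ≠ 0`, `s l := sign (x l)` is `±1`, so `b l = (s l * a l + 1) / 2` is the affine change
of variables `s l * a l = 2 * b l - 1` between `{-1, 1}` and `{0, 1}`, inverted by
`a l = s l * (2 * b l - 1)`. Under it `a l * x l = (2 * b l - 1) * |x l|`, which turns the
measurement equation into the subset-sum equation and back. -/

open Finset

namespace Int

theorem isUnit_iff_eq_neg_one_or_eq_one {u : ℤ} : IsUnit u ↔ u = -1 ∨ u = 1 :=
  isUnit_iff.trans Or.comm

theorem isUnit_sign_of_ne_zero {z : ℤ} (hz : z ≠ 0) : IsUnit z.sign := by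
  rcases hz.lt_or_gt with h | h
  · simp [sign_eq_neg_one_of_neg h]
  · simp [sign_eq_one_of_pos h]

theorem two_mul_add_one_ediv_two_of_isUnit {t : ℤ} (ht : IsUnit t) :
    2 * ((t + 1) / 2) = t + 1 := by
  rcases isUnit_iff.1 ht with rfl | rfl <;> rfl

theorem add_one_ediv_two_eq_zero_or_one_of_isUnit {t : ℤ} (ht : IsUnit t) :
    (t + 1) / 2 = 0 ∨ (t + 1) / 2 = 1 := by
  rcases isUnit_iff.1 ht with rfl | rfl <;> decide

theorem isUnit_two_mul_sub_one {b : ℤ} (hb : b = 0 ∨ b = 1) : IsUnit (2 * b - 1) := by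
  rcases hb with rfl | rfl <;> decide

end Int

theorem sum_mul_add_sum_abs_eq_two_mul_sum_mul_abs {ι : Type*} [Fintype ι] {x a b : ι → ℤ}
    (hab : ∀ l, (x l).sign * a l = 2 * b l - 1) :
    ∑ l, a l * x l + ∑ l, |x l| = 2 * ∑ l, b l * |x l| := by
  have hterm : ∀ l, a l * x l = (2 * b l - 1) * |x l| := fun l => by
    rw [← hab, mul_comm (x l).sign, mul_assoc, Int.sign_mul_abs]
  simp only [hterm, sub_mul, sum_sub_distrib, mul_assoc, ← mul_sum]
  ring

theorem kpa_eve_ssp_bijection_general (n : ℕ) (x : Fin n → ℤ)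
    (hx : ∀ l, x l ≠ 0) (y : ℤ) :
    Set.BijOn (fun (a : Fin n → ℤ) (l : Fin n) => (Int.sign (x l) * a l + 1) / 2)
      {a : Fin n → ℤ | (∀ l, a l = -1 ∨ a l = 1) ∧ y = ∑ l, a l * x l}
      {b : Fin n → ℤ | (∀ l, b l = 0 ∨ b l = 1) ∧
        y + ∑ l, |x l| = 2 * ∑ l, b l * |x l|} := by
  have hs : ∀ l, IsUnit (x l).sign := fun l => Int.isUnit_sign_of_ne_zero (hx l)
  have hsa : ∀ a : Fin n → ℤ, (∀ l, a l = -1 ∨ a l = 1) → ∀ l, IsUnit ((x l).sign * a l) :=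
    fun a ha l => (hs l).mul (Int.isUnit_iff_eq_neg_one_or_eq_one.2 (ha l))
  refine ⟨?_, ?_, ?_⟩
  · rintro a ⟨ha, rfl⟩
    refine ⟨fun l => Int.add_one_ediv_two_eq_zero_or_one_of_isUnit (hsa a ha l), ?_⟩
    refine sum_mul_add_sum_abs_eq_two_mul_sum_mul_abs fun l => ?_
    rw [Int.two_mul_add_one_ediv_two_of_isUnit (hsa a ha l), add_sub_cancel_right]
  · rintro a ⟨ha, -⟩ a' ⟨ha', -⟩ h
    funext l
    refine mul_left_cancel₀ (hs l).ne_zero (add_right_cancel (b := (1 : ℤ)) ?_)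
    rw [← Int.two_mul_add_one_ediv_two_of_isUnit (hsa a ha l),
      ← Int.two_mul_add_one_ediv_two_of_isUnit (hsa a' ha' l)]
    exact congrArg (2 * ·) (congrFun h l)
  · rintro b ⟨hb, hy⟩
    have hab : ∀ l, (x l).sign * ((x l).sign * (2 * b l - 1)) = 2 * b l - 1 := fun l => by
      rw [← mul_assoc, Int.isUnit_mul_self (hs l), one_mul]
    refine ⟨fun l => (x l).sign * (2 * b l - 1), ⟨fun l => ?_, ?_⟩, funext fun l => ?_⟩
    · exact Int.isUnit_iff_eq_neg_one_or_eq_one.1 ((hs l).mul (Int.isUnit_two_mul_sub_one (hb l)))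
    · linarith [sum_mul_add_sum_abs_eq_two_mul_sum_mul_abs hab]
    · simp only [hab]
      omega

theorem kpa_eve_ssp_bijection (n : ℕ) (hn : 0 < n) (x : Fin n → ℤ)
    (hx : ∀ l, x l ≠ 0) (y : ℤ) :
    Set.BijOn (fun (a : Fin n → ℤ) (l : Fin n) => (Int.sign (x l) * a l + 1) / 2)
      {a : Fin n → ℤ | (∀ l, a l = -1 ∨ a l = 1) ∧ y = ∑ l, a l * x l}
      {b : Fin n → ℤ | (∀ l, b l = 0 ∨ b l = 1) ∧
        y + ∑ l, |x l| = 2 * ∑ l, b l * |x l|} :=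
  kpa_eve_ssp_bijection_general n x hx y
end

section
/- Let n ≥ 1, L ≥ 1 be integers, x : Fin n → ℤ with 1 ≤ |x l| ≤ L for all l, a⁰ : Fin n → ℤ antipodal, c an integer with 0 ≤ c ≤ n, and ε ∈ ℤ. The map sending an antipodal vector a¹ : Fin n → ℤ to b : Fin n → ℤ with b l = (1 - a¹ l * a⁰ l)/2 is a bijection between the set of antipodal vectors a¹ such that ε = ∑ l, (a¹ l - a⁰ l) * x l and a¹ differs from a⁰ in exactly c entries, and the set of binary vectors b (entries in {0,1}) satisfying ε/2 + L·c = ∑ l, b l * (L - a⁰ l * x l) and ∑ l, b l = c (where the first equation is interpreted over ℤ after clearing the factor 2: ε + 2Lc = 2∑ l, b l(L - a⁰ l x l)). -/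
/-!
The antipodal vector `a¹` and the bit vector `b` determine each other through
`a¹ l = (1 - 2 b l) a⁰ l` and `b l = (1 - a¹ l a⁰ l) / 2`, because `a⁰ l * a⁰ l = 1`; `b` marks
the sign flips, so `∑ b l` counts them. Termwise,
`(a¹ l - a⁰ l) x l = -2 b l a⁰ l x l = 2 b l (L - a⁰ l x l) - 2 L b l`, which turns the residual
equation into the subset-sum equation once `∑ b l = c`.
-/

open Finset

def flipBit (s t : ℤ) : ℤ := (1 - s * t) / 2

section flipBit

variable {s t : ℤ}

lemma flipBit_eq_ite (hs : s = -1 ∨ s = 1) (ht : t = -1 ∨ t = 1) :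
    flipBit s t = if s = t then 0 else 1 := by
  rcases hs with rfl | rfl <;> rcases ht with rfl | rfl <;> decide

lemma flipBit_eq_zero_or_one (hs : s = -1 ∨ s = 1) (ht : t = -1 ∨ t = 1) :
    flipBit s t = 0 ∨ flipBit s t = 1 := by
  rw [flipBit_eq_ite hs ht]
  split_ifs <;> simp

lemma one_sub_two_mul_flipBit_mul (hs : s = -1 ∨ s = 1) (ht : t = -1 ∨ t = 1) :
    (1 - 2 * flipBit s t) * t = s := by
  rcases hs with rfl | rfl <;> rcases ht with rfl | rfl <;> decide

lemma flipBit_one_sub_two_mul_mul (b : ℤ) (ht : t * t = 1) :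
    flipBit ((1 - 2 * b) * t) t = b := by
  have : 1 - (1 - 2 * b) * t * t = 2 * b := by linear_combination -(1 - 2 * b) * ht
  rw [flipBit, this, Int.mul_ediv_cancel_left _ two_ne_zero]

lemma one_sub_two_mul_mul_eq_neg_one_or_one {b : ℤ} (hb : b = 0 ∨ b = 1)
    (ht : t = -1 ∨ t = 1) : (1 - 2 * b) * t = -1 ∨ (1 - 2 * b) * t = 1 := by
  rcases hb with rfl | rfl <;> rcases ht with rfl | rfl <;> decide

end flipBit

variable {ι : Type*} [Fintype ι]

lemma sum_flipBit_eq_card_filter_ne {a a0 : ι → ℤ} (ha : ∀ l, a l = -1 ∨ a l = 1)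
    (ha0 : ∀ l, a0 l = -1 ∨ a0 l = 1) :
    ∑ l, flipBit (a l) (a0 l) = (univ.filter fun l => a l ≠ a0 l).card := by
  rw [card_filter]
  push_cast
  refine sum_congr rfl fun l _ => ?_
  rw [flipBit_eq_ite (ha l) (ha0 l)]
  split_ifs <;> simp_all

lemma sum_flip_sub_mul (a0 b x : ι → ℤ) (L : ℤ) :
    ∑ l, ((1 - 2 * b l) * a0 l - a0 l) * x l
      = 2 * ∑ l, b l * (L - a0 l * x l) - 2 * L * ∑ l, b l := by
  rw [mul_sum, mul_sum, ← sum_sub_distrib]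
  exact sum_congr rfl fun l _ => by ring

lemma sum_sub_mul_eq_flipBit {a a0 : ι → ℤ} (ha : ∀ l, a l = -1 ∨ a l = 1)
    (ha0 : ∀ l, a0 l = -1 ∨ a0 l = 1) (x : ι → ℤ) (L : ℤ) :
    ∑ l, (a l - a0 l) * x l = 2 * ∑ l, flipBit (a l) (a0 l) * (L - a0 l * x l)
      - 2 * L * ∑ l, flipBit (a l) (a0 l) := by
  rw [← sum_flip_sub_mul]
  exact sum_congr rfl fun l _ => by rw [one_sub_two_mul_flipBit_mul (ha l) (ha0 l)]

theorem kpa_steve_ssp_bijection_general (n : ℕ) (L : ℤ)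
    (x : Fin n → ℤ)
    (a0 : Fin n → ℤ) (ha0 : ∀ l, a0 l = -1 ∨ a0 l = 1)
    (c : ℤ) (ε : ℤ) :
    Set.BijOn (fun (a1 : Fin n → ℤ) (l : Fin n) => (1 - a1 l * a0 l) / 2)
      {a1 : Fin n → ℤ | (∀ l, a1 l = -1 ∨ a1 l = 1) ∧
        ε = ∑ l, (a1 l - a0 l) * x l ∧
        ((Finset.univ.filter (fun l => a1 l ≠ a0 l)).card : ℤ) = c}
      {b : Fin n → ℤ | (∀ l, b l = 0 ∨ b l = 1) ∧
        ε + 2 * L * c = 2 * ∑ l, b l * (L - a0 l * x l) ∧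
        ∑ l, b l = c} := by
  show Set.BijOn (fun (a : Fin n → ℤ) l => flipBit (a l) (a0 l)) _ _
  have ha0_sq : ∀ l, a0 l * a0 l = 1 := fun l => by rcases ha0 l with h | h <;> simp [h]
  set decode : (Fin n → ℤ) → Fin n → ℤ := fun b l => (1 - 2 * b l) * a0 l
  refine Set.InvOn.bijOn (f' := decode) ⟨?_, ?_⟩ ?_ ?_
  · rintro a ⟨ha, -, -⟩
    exact funext fun l => one_sub_two_mul_flipBit_mul (ha l) (ha0 l)
  · rintro b -
    exact funext fun l => flipBit_one_sub_two_mul_mul (b l) (ha0_sq l)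
  · rintro a ⟨ha, hε, hc⟩
    have hsum := (sum_flipBit_eq_card_filter_ne ha ha0).trans hc
    refine ⟨fun l => flipBit_eq_zero_or_one (ha l) (ha0 l), ?_, hsum⟩
    linear_combination hε + sum_sub_mul_eq_flipBit ha ha0 x L - 2 * L * hsum
  · rintro b ⟨hb, hε, hc⟩
    have ha : ∀ l, decode b l = -1 ∨ decode b l = 1 :=
      fun l => one_sub_two_mul_mul_eq_neg_one_or_one (hb l) (ha0 l)
    refine ⟨ha, ?_, ?_⟩
    · linear_combination hε - sum_flip_sub_mul a0 b x L + 2 * L * hc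
    · rw [← sum_flipBit_eq_card_filter_ne ha ha0, ← hc]
      exact sum_congr rfl fun l _ => flipBit_one_sub_two_mul_mul (b l) (ha0_sq l)

theorem kpa_steve_ssp_bijection (n : ℕ) (hn : 1 ≤ n) (L : ℤ) (hL : 1 ≤ L)
    (x : Fin n → ℤ) (hx : ∀ l, 1 ≤ |x l| ∧ |x l| ≤ L)
    (a0 : Fin n → ℤ) (ha0 : ∀ l, a0 l = -1 ∨ a0 l = 1)
    (c : ℤ) (hc0 : 0 ≤ c) (hcn : c ≤ n) (ε : ℤ) :
    Set.BijOn (fun (a1 : Fin n → ℤ) (l : Fin n) => (1 - a1 l * a0 l) / 2)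
      {a1 : Fin n → ℤ | (∀ l, a1 l = -1 ∨ a1 l = 1) ∧
        ε = ∑ l, (a1 l - a0 l) * x l ∧
        ((Finset.univ.filter (fun l => a1 l ≠ a0 l)).card : ℤ) = c}
      {b : Fin n → ℤ | (∀ l, b l = 0 ∨ b l = 1) ∧
        ε + 2 * L * c = 2 * ∑ l, b l * (L - a0 l * x l) ∧
        ∑ l, b l = c} :=
  kpa_steve_ssp_bijection_general n L x a0 ha0 c ε
end

section
/- For an integer L ≥ 1, the number of configurations (u₀, u₁, u₂, b₀, b₁, b₂) with u l ∈ {1,…,L} and b l ∈ {0,1} not all equal (i.e. (b₀,b₁,b₂) ∉ {(0,0,0),(1,1,1)}) satisfying ∑_{l : b l = 0} u l = ∑_{l : b l = 1} u l is exactly 3L(L-1). -/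
/-!
Fix the magnitudes `(a, b, c)`. A non-constant sign pattern puts one index alone on one side,
so it balances exactly when that magnitude is the sum of the other two; each of the three
equations `a + b = c`, `a + c = b`, `b + c = a` is met by a pattern and its complement. Summing
over `[1, L]³`, each equation has `∑_{x=1}^{L} (L - x) = L(L-1)/2` solutions.
-/

open Finset

lemma sum_Icc_one_sub_eq_sum_range (L : ℕ) : ∑ x ∈ Icc 1 L, (L - x) = ∑ i ∈ range L, i :=
  sum_nbij' (fun x => L - x) (fun i => L - i) (by intro x; simp; omega) (by intro i; simp; omega)
    (by intro x; simp; omega) (by intro i; simp; omega) (fun _ _ => rfl)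

lemma sum_Icc_ite_add_eq (L : ℕ) :
    ∑ x ∈ Icc 1 L, ∑ y ∈ Icc 1 L, ∑ z ∈ Icc 1 L, (if x + y = z then 1 else 0) =
      ∑ i ∈ range L, i := by
  rw [← sum_Icc_one_sub_eq_sum_range]
  refine sum_congr rfl fun x hx => ?_
  have hx := mem_Icc.1 hx
  calc ∑ y ∈ Icc 1 L, ∑ z ∈ Icc 1 L, (if x + y = z then 1 else 0)
      = #{y ∈ Icc 1 L | x + y ≤ L} := by
        rw [card_filter]
        refine sum_congr rfl fun y hy => ?_
        simp only [sum_ite_eq, mem_Icc] at hy ⊢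
        exact if_congr (by omega) rfl rfl
    _ = #(Icc 1 (L - x)) := by congr 1; ext y; simp; omega
    _ = L - x := by simp

lemma card_balanced_signs (a b c : ℕ) :
    (({0, 1} ×ˢ {0, 1} ×ˢ {0, 1} : Finset (ℕ × ℕ × ℕ)).filter
      (fun s => ¬(s = (0, 0, 0) ∨ s = (1, 1, 1)) ∧
        (if s.1 = 0 then a else 0) + (if s.2.1 = 0 then b else 0) + (if s.2.2 = 0 then c else 0)
          = (if s.1 = 1 then a else 0) + (if s.2.1 = 1 then b else 0)
            + (if s.2.2 = 1 then c else 0))).card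
      = 2 * ((if a + b = c then 1 else 0) + (if a + c = b then 1 else 0)
          + (if b + c = a then 1 else 0)) := by
  simp only [card_filter, sum_product, sum_pair zero_ne_one, Prod.mk.injEq, zero_ne_one,
    one_ne_zero, ↓reduceIte, and_true, and_false, true_and, false_and, or_self,
    or_true, or_false, not_true_eq_false, not_false_eq_true, add_zero, zero_add,
    Nat.add_eq_zero_iff]
  split_ifs <;> omega

theorem hamming_three_count_general (L : ℕ) :
    ((((Finset.Icc 1 L) ×ˢ (Finset.Icc 1 L) ×ˢ (Finset.Icc 1 L)) ×ˢ
        (({0, 1} : Finset ℕ) ×ˢ ({0, 1} : Finset ℕ) ×ˢ ({0, 1} : Finset ℕ))).filter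
        (fun q => ¬(q.2 = (0, 0, 0) ∨ q.2 = (1, 1, 1)) ∧
          ((if q.2.1 = 0 then q.1.1 else 0) + (if q.2.2.1 = 0 then q.1.2.1 else 0)
            + (if q.2.2.2 = 0 then q.1.2.2 else 0)
          = (if q.2.1 = 1 then q.1.1 else 0) + (if q.2.2.1 = 1 then q.1.2.1 else 0)
            + (if q.2.2.2 = 1 then q.1.2.2 else 0)))).card = 3 * L * (L - 1) := by
  rw [card_filter, sum_product]
  simp only [← card_filter, card_balanced_signs]
  simp only [← mul_sum, sum_add_distrib, sum_product]
  have hac : ∑ x ∈ Icc 1 L, ∑ y ∈ Icc 1 L, ∑ z ∈ Icc 1 L, (if x + z = y then 1 else 0) =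
      ∑ i ∈ range L, i := by
    rw [← sum_Icc_ite_add_eq L]
    exact sum_congr rfl fun x _ => sum_comm
  have hbc : ∑ x ∈ Icc 1 L, ∑ y ∈ Icc 1 L, ∑ z ∈ Icc 1 L, (if y + z = x then 1 else 0) =
      ∑ i ∈ range L, i := by
    rw [sum_comm, ← sum_Icc_ite_add_eq L]
    exact sum_congr rfl fun x _ => sum_comm
  rw [sum_Icc_ite_add_eq, hac, hbc, mul_assoc, ← sum_range_id_mul_two]
  ring

theorem hamming_three_count (L : ℕ) (hL : 1 ≤ L) :
    ((((Finset.Icc 1 L) ×ˢ (Finset.Icc 1 L) ×ˢ (Finset.Icc 1 L)) ×ˢ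
        (({0, 1} : Finset ℕ) ×ˢ ({0, 1} : Finset ℕ) ×ˢ ({0, 1} : Finset ℕ))).filter
        (fun q => ¬(q.2 = (0, 0, 0) ∨ q.2 = (1, 1, 1)) ∧
          ((if q.2.1 = 0 then q.1.1 else 0) + (if q.2.2.1 = 0 then q.1.2.1 else 0)
            + (if q.2.2.2 = 0 then q.1.2.2 else 0)
          = (if q.2.1 = 1 then q.1.1 else 0) + (if q.2.2.1 = 1 then q.1.2.1 else 0)
            + (if q.2.2.2 = 1 then q.1.2.2 else 0)))).card = 3 * L * (L - 1) :=
  hamming_three_count_general L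
end
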